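/- Let H_k(x) = x(x+1)⋯(x+k−1). For any fixed n and any l ≥ 1, the expression H_{2l−1}(n+1+k) − H_{2l−1}(n−k), viewed as a polynomial in t = k + 1/2, is an odd polynomial in t of degree 2l−1 with leading coefficient 2; i.e., it equals 2(k+1/2)^{2l−1} plus odd powers of (k+1/2) of degree at most 2l−3. -/
import Mathlib

open Polynomial

lemma coeff_comp_negX (p : ℚ[X]) (i : ℕ) : (p.comp (-X)).coeff i = (-1) ^ i * p.coeff i := by
  induction p using Polynomial.induction_on' with
  | add p q hp hq => simp [add_comp, hp, hq, mul_add]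
  | monomial m a =>
    rw [monomial_comp]
    have : (-X : ℚ[X]) ^ m = C ((-1)^m) * X ^ m := by
      rw [neg_pow]; simp [map_pow]
    rw [this, ← mul_assoc, ← C_mul, coeff_C_mul_X_pow]
    by_cases h : m = i
    · subst h; simp [coeff_monomial, mul_comm]
    · simp [coeff_monomial, h, Ne.symm h]

/-- With `H_k(x) = x(x+1)⋯(x+k-1)` the rising factorial, for any `n : ℚ` and `l ≥ 1`,
the expression `H_{2l-1}(n + 1 + k) - H_{2l-1}(n - k)` is, as a polynomial in
`t = k + 1/2`, an odd polynomial of degree `2l - 1` with leading term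
`2 (k + 1/2) ^ (2l - 1)`, the remaining odd terms having degree at most `2l - 3`. -/
theorem pochhammer_odd_difference_half_shift (l : ℕ) (hl : 1 ≤ l) (n : ℚ) :
    ∃ p : Polynomial ℚ, p.natDegree ≤ 2 * l - 3 ∧ (∀ i, Even i → p.coeff i = 0) ∧
      ∀ k : ℚ,
        (ascPochhammer ℚ (2 * l - 1)).eval (n + 1 + k) -
            (ascPochhammer ℚ (2 * l - 1)).eval (n - k) =
          2 * (k + 1 / 2) ^ (2 * l - 1) + p.eval (k + 1 / 2) := by
  obtain ⟨m, rfl⟩ : ∃ m, l = m + 1 := ⟨l - 1, (Nat.succ_pred_eq_of_pos hl).symm⟩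
  have h1 : 2 * (m + 1) - 1 = 2 * m + 1 := by omega
  have h3 : 2 * (m + 1) - 3 = 2 * m - 1 := by omega
  rw [h1, h3]
  set F : ℚ[X] := (ascPochhammer ℚ (2 * m + 1)).comp (X + C (n + 1/2)) with hF
  have hFm : F.Monic := Monic.comp_X_add_C (monic_ascPochhammer ℚ _) _
  have hFd : F.natDegree = 2 * m + 1 := by
    rw [hF, natDegree_comp, natDegree_X_add_C, ascPochhammer_natDegree, mul_one]
  set q : ℚ[X] := F - F.comp (-X) with hq
  have hqc : ∀ i, q.coeff i = (1 - (-1) ^ i) * F.coeff i := by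
    intro i
    simp [hq, coeff_comp_negX, sub_mul, one_mul]
  have hodd : Odd (2 * m + 1) := odd_two_mul_add_one m
  refine ⟨q - C 2 * X ^ (2 * m + 1), ?_, ?_, ?_⟩
  · rw [natDegree_le_iff_coeff_eq_zero]
    intro i hi
    rw [coeff_sub, hqc, coeff_C_mul, coeff_X_pow]
    rcases Nat.even_or_odd i with he | ho
    · rw [he.neg_one_pow]
      have : ¬ i = 2 * m + 1 := by
        rintro rfl; exact (Nat.even_add_one.mp he) (even_two_mul m)
      simp [this]
    · by_cases hie : i = 2 * m + 1
      · subst hie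
        rw [hodd.neg_one_pow, show F.coeff (2 * m + 1) = 1 from hFd ▸ hFm.coeff_natDegree]
        simp; ring
      · have hgt : 2 * m + 1 < i := by obtain ⟨j, rfl⟩ := ho; omega
        rw [coeff_eq_zero_of_natDegree_lt (hFd ▸ hgt)]
        simp [hie]
  · intro i hi
    rw [coeff_sub, hqc, hi.neg_one_pow, coeff_C_mul, coeff_X_pow]
    have : ¬ i = 2 * m + 1 := by
      rintro rfl; exact (Nat.even_add_one.mp hi) (even_two_mul m)
    simp [this]
  · intro k
    have e1 : (ascPochhammer ℚ (2 * m + 1)).eval (n + 1 + k) = F.eval (k + 1/2) := by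
      rw [hF, eval_comp, eval_add, eval_X, eval_C]; congr 1; ring
    have e2 : (ascPochhammer ℚ (2 * m + 1)).eval (n - k) = F.eval (-(k + 1/2)) := by
      rw [hF, eval_comp, eval_add, eval_X, eval_C]; congr 1; ring
    rw [e1, e2]
    simp only [hq, eval_sub, eval_mul, eval_comp, eval_neg, eval_X, eval_C, eval_pow]
    ring
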